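/- Let K be a field of characteristic zero, let q ∈ K[X] be nonzero with deg(q) ≤ d, and let β ∈ M_m(K(X)) be such that qβ has polynomial entries of degree at most d. Define the operator Γ on column vectors v ∈ K(X)^m by Γ(v) = βv − v′. Then for every column vector v ∈ K[X]^m with polynomial entries and every k ≥ 0, the vector q^k·Γ^k(v) has polynomial entries of degree at most deg(v) + k·d. -/

import Mathlib

/-- The operator `Γ` on column vectors: `Γ(v) = β v − v′`, the derivation `der`
being applied entrywise. -/
def cvGamma {F : Type*} [Field F] {m : ℕ} (der : F → F)
    (β : Matrix (Fin m) (Fin m) F) (v : Fin m → F) : Fin m → F :=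
  β.mulVec v - fun i => der (v i)

/-!
Write `q β = a` with `a` a polynomial matrix. If `q^k Γ^k(v) = P` is a polynomial vector, then
differentiating `q^k w = P` for `w = Γ^k(v)` gives `q^(k+1) w′ = q P′ − k q′ P`, hence
`q^(k+1) Γ^(k+1)(v) = a P − q P′ + k q′ P`: again a polynomial vector, and each of its three
terms raises the degree by at most `d`. Induction on `k` finishes the proof.
-/

open Polynomial

section Leibniz

variable {K L : Type*} [CommSemiring K] [CommSemiring L] [Algebra K[X] L]

theorem map_derivative_of_leibniz (der : L → L)
    (h_add : ∀ a b : L, der (a + b) = der a + der b)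
    (h_mul : ∀ a b : L, der (a * b) = a * der b + der a * b)
    (h_X : der (algebraMap K[X] L X) = 1) (h_C : ∀ c : K, der (algebraMap K[X] L (C c)) = 0)
    (p : K[X]) : der (algebraMap K[X] L p) = algebraMap K[X] L (derivative p) := by
  induction p using Polynomial.induction_on' with
  | add p q hp hq => rw [map_add, h_add, hp, hq, derivative_add, map_add]
  | monomial n c =>
    induction n with
    | zero => simp [h_C]
    | succ n ih =>
      rw [← C_mul_X_pow_eq_monomial] at ih ⊢
      rw [pow_succ, ← mul_assoc, map_mul, h_mul, ih, h_X, derivative_mul (f := C c * X ^ n),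
        derivative_X, mul_one, mul_one, map_add, map_mul _ _ X, add_comm]

end Leibniz

section PolynomialStep

variable {K : Type*} [CommRing K] {m : ℕ}

noncomputable def gammaNumerator (a : Matrix (Fin m) (Fin m) K[X]) (q : K[X]) (k : ℕ)
    (P : Fin m → K[X]) : Fin m → K[X] :=
  fun j => ∑ l, a j l * P l - q * derivative (P j) + k * derivative q * P j

theorem natDegree_gammaNumerator_le {a : Matrix (Fin m) (Fin m) K[X]} {q : K[X]}
    {P : Fin m → K[X]} {d n : ℕ} (ha : ∀ i j, (a i j).natDegree ≤ d)
    (hq : q.natDegree ≤ d) (hP : ∀ l, (P l).natDegree ≤ n) (k : ℕ) (j : Fin m) :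
    (gammaNumerator a q k P j).natDegree ≤ n + d := by
  have hq' : (derivative q).natDegree ≤ d := (natDegree_derivative_le q).trans (by omega)
  have hk : ((k : K[X]) * derivative q).natDegree ≤ 0 + d :=
    natDegree_mul_le_of_le (natDegree_natCast k).le hq'
  have hP' : (derivative (P j)).natDegree ≤ n :=
    (natDegree_derivative_le _).trans (Nat.sub_le_of_le_add (Nat.le_add_right_of_le (hP j)))
  refine natDegree_add_le_of_degree_le
    ((natDegree_sub_le_of_le ?_ ?_).trans_eq (max_self _)) ?_
  · exact natDegree_sum_le_of_forall_le _ _ fun l _ =>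
      (natDegree_mul_le_of_le (ha j l) (hP l)).trans_eq (add_comm _ _)
  · exact (natDegree_mul_le_of_le hq hP').trans_eq (add_comm _ _)
  · exact (natDegree_mul_le_of_le hk (hP j)).trans (by omega)

theorem mul_derivative_pow (q : K[X]) (k : ℕ) :
    q * derivative (q ^ k) = k * derivative q * q ^ k := by
  cases k with
  | zero => simp
  | succ k =>
    simp only [derivative_pow_succ, map_add, C_eq_natCast, map_one]
    push_cast
    ring

end PolynomialStep

section Gamma

variable {K L : Type*} [CommRing K] [Field L] [Algebra K[X] L] {m : ℕ}

local notation "A" => algebraMap K[X] L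

theorem pow_succ_mul_cvGamma (der : L → L)
    (h_mul : ∀ a b : L, der (a * b) = a * der b + der a * b)
    (hder : ∀ p : K[X], der (A p) = A (derivative p)) {β : Matrix (Fin m) (Fin m) L}
    {q : K[X]} {a : Matrix (Fin m) (Fin m) K[X]} (ha : ∀ i j, A q * β i j = A (a i j))
    {k : ℕ} {w : Fin m → L} {P : Fin m → K[X]} (hP : ∀ l, A q ^ k * w l = A (P l))
    (j : Fin m) :
    A q ^ (k + 1) * cvGamma der β w j = A (gammaNumerator a q k P j) := by
  have h_der : A (q ^ k) * der (w j) + A (derivative (q ^ k)) * w j = A (derivative (P j)) := by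
    rw [← hder, ← hder, ← h_mul, map_pow, hP]
  have h_sum : A q ^ (k + 1) * ∑ l, β j l * w l = A (∑ l, a j l * P l) := by
    rw [Finset.mul_sum, map_sum]
    refine Finset.sum_congr rfl fun l _ => ?_
    rw [map_mul, ← ha, ← hP]
    ring
  have h_pow : A q * A (derivative (q ^ k)) * w j = A (k * derivative q) * A (P j) := by
    rw [← map_mul, mul_derivative_pow, map_mul, map_mul, ← hP, map_pow]
    ring
  simp only [cvGamma, Matrix.mulVec, dotProduct, Pi.sub_apply, mul_sub, h_sum, gammaNumerator,
    map_add, map_sub, map_mul, map_pow] at h_der h_pow ⊢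
  linear_combination h_pow - A q * h_der

theorem exists_natDegree_le_pow_mul_iterate_cvGamma (der : L → L)
    (h_mul : ∀ a b : L, der (a * b) = a * der b + der a * b)
    (hder : ∀ p : K[X], der (A p) = A (derivative p)) {β : Matrix (Fin m) (Fin m) L}
    {q : K[X]} {a : Matrix (Fin m) (Fin m) K[X]} (ha : ∀ i j, A q * β i j = A (a i j)) {d : ℕ}
    (hq : q.natDegree ≤ d) (had : ∀ i j, (a i j).natDegree ≤ d) {v : Fin m → K[X]} {n : ℕ}
    (hv : ∀ l, (v l).natDegree ≤ n) (k : ℕ) (j : Fin m) :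
    ∃ p : K[X], p.natDegree ≤ n + k * d ∧
      A q ^ k * (cvGamma der β)^[k] (fun l => A (v l)) j = A p := by
  induction k generalizing j with
  | zero => exact ⟨v j, by simpa using hv j, by simp⟩
  | succ k ih =>
    choose P hP_deg hP using ih
    refine ⟨gammaNumerator a q k P j, ?_, ?_⟩
    · exact (natDegree_gammaNumerator_le had hq hP_deg k j).trans
        (by rw [add_mul, one_mul, add_assoc])
    · rw [Function.iterate_succ_apply']
      exact pow_succ_mul_cvGamma der h_mul hder ha hP j

end Gamma

theorem qk_gammak_polynomial_degree_general {K : Type*} [Field K] {m : ℕ}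
    (der : RatFunc K → RatFunc K)
    (h_add : ∀ a b : RatFunc K, der (a + b) = der a + der b)
    (h_mul : ∀ a b : RatFunc K, der (a * b) = a * der b + der a * b)
    (h_X : der RatFunc.X = 1)
    (h_C : ∀ c : K, der (RatFunc.C c) = 0)
    (q : Polynomial K) (d : ℕ) (hqd : q.degree ≤ (d : WithBot ℕ))
    (β : Matrix (Fin m) (Fin m) (RatFunc K))
    (hβ : ∀ i j : Fin m, ∃ p : Polynomial K, p.degree ≤ (d : WithBot ℕ) ∧
      algebraMap (Polynomial K) (RatFunc K) q * β i j
        = algebraMap (Polynomial K) (RatFunc K) p)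
    (v : Fin m → Polynomial K) (k : ℕ) :
    ∀ j : Fin m, ∃ p : Polynomial K,
      p.degree ≤ (((Finset.univ.sup fun l => (v l).natDegree) + k * d : ℕ) : WithBot ℕ) ∧
      (algebraMap (Polynomial K) (RatFunc K) q) ^ k *
        (cvGamma der β)^[k] (fun l => algebraMap (Polynomial K) (RatFunc K) (v l)) j
        = algebraMap (Polynomial K) (RatFunc K) p := by
  choose a ha_deg ha using hβ
  have hder := map_derivative_of_leibniz der h_add h_mul (by rwa [RatFunc.algebraMap_X])
    (by simpa only [RatFunc.algebraMap_C] using h_C)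
  intro j
  obtain ⟨p, hp_deg, hp⟩ := exists_natDegree_le_pow_mul_iterate_cvGamma der h_mul hder ha
    (natDegree_le_iff_degree_le.2 hqd) (fun i j => natDegree_le_iff_degree_le.2 (ha_deg i j))
    (fun l => Finset.le_sup (f := fun l => (v l).natDegree) (Finset.mem_univ l)) k j
  exact ⟨p, natDegree_le_iff_degree_le.1 hp_deg, hp⟩

/-- If `q β` has polynomial entries of degree `≤ d` with `deg q ≤ d` and `v` is a
column vector of polynomials, then `q^k Γ^k(v)` has polynomial entries of degree
at most `deg v + k d`.  Here `der` is the derivation of `K(X)` extending `d/dX`. -/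
theorem qk_gammak_polynomial_degree {K : Type*} [Field K] [CharZero K] {m : ℕ}
    (der : RatFunc K → RatFunc K)
    (h_add : ∀ a b : RatFunc K, der (a + b) = der a + der b)
    (h_mul : ∀ a b : RatFunc K, der (a * b) = a * der b + der a * b)
    (h_X : der RatFunc.X = 1)
    (h_C : ∀ c : K, der (RatFunc.C c) = 0)
    (q : Polynomial K) (hq : q ≠ 0) (d : ℕ) (hqd : q.degree ≤ (d : WithBot ℕ))
    (β : Matrix (Fin m) (Fin m) (RatFunc K))
    (hβ : ∀ i j : Fin m, ∃ p : Polynomial K, p.degree ≤ (d : WithBot ℕ) ∧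
      algebraMap (Polynomial K) (RatFunc K) q * β i j
        = algebraMap (Polynomial K) (RatFunc K) p)
    (v : Fin m → Polynomial K) (k : ℕ) :
    ∀ j : Fin m, ∃ p : Polynomial K,
      p.degree ≤ (((Finset.univ.sup fun l => (v l).natDegree) + k * d : ℕ) : WithBot ℕ) ∧
      (algebraMap (Polynomial K) (RatFunc K) q) ^ k *
        (cvGamma der β)^[k] (fun l => algebraMap (Polynomial K) (RatFunc K) (v l)) j
        = algebraMap (Polynomial K) (RatFunc K) p :=
  qk_gammak_polynomial_degree_general der h_add h_mul h_X h_C q d hqd β hβ v k
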